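/- Let l ∈ (0, 1/6), r = 1 − 2l, c = l·r², and let M be as defined. Define f : [0,1] → ℝ by f(x) = c·log l − (1/3)(c·log c − c) + (1/6)((2x−1)³ − (2l−1)³) for 0 ≤ x ≤ l; f(x) = c·log x − (1/3)(c·log c − c) for l ≤ x ≤ r; and f(x) = c·log r − (1/3)(c·log c − c) + (1/4)(x² − r²) − (1/6)(x³ − r³) for r ≤ x ≤ 1. Then f(x) + f(y) + f(z) ≤ x·y·z for all (x,y,z) ∈ [0,1]³, with equality for all (x,y,z) ∈ M. -/

import Mathlib

open Set

/-- The set `M ⊆ [0,1]³`: the union of the three segments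
`Mx = {(t, 1−2t, 1−2t) : 0 ≤ t ≤ l}`, `My = {(1−2t, t, 1−2t) : 0 ≤ t ≤ l}`,
`Mz = {(1−2t, 1−2t, t) : 0 ≤ t ≤ l}` and the two-dimensional piece
`M₂ = {(x,y,z) : l ≤ x,y,z ≤ 1−2l, xyz = l(1−2l)²}`. -/
def Mset (l : ℝ) : Set (ℝ × ℝ × ℝ) :=
  {p | ∃ t, 0 ≤ t ∧ t ≤ l ∧
    (p = (t, 1 - 2*t, 1 - 2*t) ∨ p = (1 - 2*t, t, 1 - 2*t) ∨ p = (1 - 2*t, 1 - 2*t, t))} ∪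
  {p | l ≤ p.1 ∧ p.1 ≤ 1 - 2*l ∧ l ≤ p.2.1 ∧ p.2.1 ≤ 1 - 2*l ∧ l ≤ p.2.2 ∧ p.2.2 ≤ 1 - 2*l ∧
    p.1 * p.2.1 * p.2.2 = l * (1 - 2*l)^2}

/-- The explicit dual potential for the cost function `xyz`, with `r = 1 − 2l`, `c = l·r²`:
`f(x) = c·log l − (1/3)(c·log c − c) + (1/6)((2x−1)³ − (2l−1)³)` for `0 ≤ x ≤ l`,
`f(x) = c·log x − (1/3)(c·log c − c)` for `l ≤ x ≤ r`,
`f(x) = c·log r − (1/3)(c·log c − c) + (1/4)(x² − r²) − (1/6)(x³ − r³)` for `r ≤ x ≤ 1`. -/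
noncomputable def dualF (l : ℝ) (x : ℝ) : ℝ :=
  if x ≤ l then
    (l * (1 - 2*l)^2) * Real.log l
      - (1/3) * ((l * (1 - 2*l)^2) * Real.log (l * (1 - 2*l)^2) - (l * (1 - 2*l)^2))
      + (1/6) * ((2*x - 1)^3 - (2*l - 1)^3)
  else if x ≤ 1 - 2*l then
    (l * (1 - 2*l)^2) * Real.log x
      - (1/3) * ((l * (1 - 2*l)^2) * Real.log (l * (1 - 2*l)^2) - (l * (1 - 2*l)^2))
  else
    (l * (1 - 2*l)^2) * Real.log (1 - 2*l)
      - (1/3) * ((l * (1 - 2*l)^2) * Real.log (l * (1 - 2*l)^2) - (l * (1 - 2*l)^2))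
      + (1/4) * (x^2 - (1 - 2*l)^2) - (1/6) * (x^3 - (1 - 2*l)^3)

/-!
Write `r = 1 - 2l`, `c = l r²` and `K = -(c log c - c)/3`, so that `f = c log + K` on `[l, r]`
and `3K + c log c = c`. For the inequality, count the coordinates below `l`.
* None: on `[l, 1]` the second-order Taylor bound of `log` at `r` gives `f ≤ c log + K`, so the
  sum is at most `c log (xyz/c) + c ≤ xyz` by `log u ≤ u - 1`.
* One, say `x`: on `[l, 1]`, `f` is at most `c log r + K` plus a polynomial (Taylor again), and
  the claim becomes a polynomial inequality.
* Two or three: `f` is increasing on `[0, 1]`, so the sum is at most `2 f(l) + f(1)`, which is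
  nonpositive because `r / l ≥ 4` and `log 4 > 1.38`.
On `M₂` the logarithms add up to `log c`; on the segments equality is a polynomial identity.
-/

open Real

theorem monotoneOn_log_one_add_sub_add_sq_div_two :
    MonotoneOn (fun w : ℝ => log (1 + w) - w + w ^ 2 / 2) (Ioi (-1)) := by
  have hderiv : ∀ w ∈ Ioi (-1 : ℝ),
      HasDerivAt (fun w : ℝ => log (1 + w) - w + w ^ 2 / 2) (w ^ 2 / (1 + w)) w := by
    intro w hw
    have hw : 0 < 1 + w := by linarith [mem_Ioi.mp hw]
    refine (((((hasDerivAt_id' w).const_add 1).log hw.ne').sub (hasDerivAt_id' w)).add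
      ((hasDerivAt_pow 2 w).div_const 2)).congr_deriv ?_
    field_simp
    ring
  refine monotoneOn_of_hasDerivWithinAt_nonneg (convex_Ioi _)
    (fun w hw ↦ (hderiv w hw).continuousAt.continuousWithinAt)
    (fun w hw ↦ (hderiv w (interior_subset hw)).hasDerivWithinAt) fun w hw ↦ ?_
  rw [interior_Ioi, mem_Ioi] at hw
  have : 0 < 1 + w := by linarith
  positivity

theorem log_sub_taylor_two {a y : ℝ} (ha : 0 < a) (hy : 0 < y) :
    log y - (log a + (y - a) / a - (y - a) ^ 2 / (2 * a ^ 2))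
      = log (1 + (y - a) / a) - (y - a) / a + ((y - a) / a) ^ 2 / 2 := by
  rw [show 1 + (y - a) / a = y / a by field_simp; ring, log_div hy.ne' ha.ne']
  field_simp
  ring

theorem log_le_taylor_two_of_le {a y : ℝ} (hy : 0 < y) (hya : y ≤ a) :
    log y ≤ log a + (y - a) / a - (y - a) ^ 2 / (2 * a ^ 2) := by
  have ha : 0 < a := hy.trans_le hya
  have h := monotoneOn_log_one_add_sub_add_sq_div_two
    (show (y - a) / a ∈ Ioi (-1) by rw [mem_Ioi, lt_div_iff₀ ha]; linarith)
    (show (0 : ℝ) ∈ Ioi (-1) by norm_num) (div_nonpos_of_nonpos_of_nonneg (by linarith) ha.le)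
  norm_num at h
  linarith [log_sub_taylor_two ha hy]

theorem taylor_two_le_log_of_le {a y : ℝ} (ha : 0 < a) (hay : a ≤ y) :
    log a + (y - a) / a - (y - a) ^ 2 / (2 * a ^ 2) ≤ log y := by
  have h := monotoneOn_log_one_add_sub_add_sq_div_two
    (show (0 : ℝ) ∈ Ioi (-1) by norm_num)
    (show (y - a) / a ∈ Ioi (-1) by rw [mem_Ioi, lt_div_iff₀ ha]; linarith)
    (div_nonneg (by linarith) ha.le)
  norm_num at h
  linarith [log_sub_taylor_two ha (ha.trans_le hay)]

theorem mul_log_le_mul_log_add_sub {c t : ℝ} (hc : 0 < c) (ht : 0 < t) :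
    c * log t ≤ c * log c + (t - c) := by
  have h := mul_le_mul_of_nonneg_left (log_le_sub_one_of_pos (div_pos ht hc)) hc.le
  rw [log_div ht.ne' hc.ne', mul_sub_one, mul_div_cancel₀ _ hc.ne'] at h
  linarith

noncomputable def dualC (l : ℝ) : ℝ := l * (1 - 2 * l) ^ 2

noncomputable def dualK (l : ℝ) : ℝ := -(1 / 3) * (dualC l * log (dualC l) - dualC l)

/-- On `[l, r]`, `r = 1 - 2l`, this is the second-order Taylor polynomial of `c log` at `r`
minus `c log r`; on `[r, 1]` it is the polynomial part of `dualF`. -/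
noncomputable def dualMajorant (l t : ℝ) : ℝ :=
  if t ≤ 1 - 2 * l then l * (1 - 2 * l) * (t - (1 - 2 * l)) - l * (t - (1 - 2 * l)) ^ 2 / 2
  else (1 / 4) * (t ^ 2 - (1 - 2 * l) ^ 2) - (1 / 6) * (t ^ 3 - (1 - 2 * l) ^ 3)

section

variable {l x y z t : ℝ}

theorem dualF_of_le (h : x ≤ l) :
    dualF l x = dualC l * log l + dualK l + (1 / 6) * ((2 * x - 1) ^ 3 - (2 * l - 1) ^ 3) := by
  rw [dualF, if_pos h, dualK, dualC]
  ring

theorem dualF_of_mem_Icc (h₁ : l ≤ x) (h₂ : x ≤ 1 - 2 * l) :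
    dualF l x = dualC l * log x + dualK l := by
  rcases h₁.eq_or_lt with rfl | h
  · rw [dualF, if_pos le_rfl, dualK, dualC]
    ring
  · rw [dualF, if_neg h.not_ge, if_pos h₂, dualK, dualC]
    ring

theorem dualF_of_ge (hl : l ≤ 1 / 6) (h : 1 - 2 * l ≤ x) :
    dualF l x = dualC l * log (1 - 2 * l) + dualK l
      + ((1 / 4) * (x ^ 2 - (1 - 2 * l) ^ 2) - (1 / 6) * (x ^ 3 - (1 - 2 * l) ^ 3)) := by
  rcases h.eq_or_lt with rfl | h
  · rw [dualF, if_neg (by linarith), if_pos le_rfl, dualK, dualC]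
    ring
  · rw [dualF, if_neg (by linarith), if_neg h.not_ge, dualK, dualC]
    ring

theorem dualC_pos (hl0 : 0 < l) (hl : l < 1 / 2) : 0 < dualC l := by
  have : 0 < 1 - 2 * l := by linarith
  unfold dualC
  positivity

theorem three_mul_dualK : 3 * dualK l = dualC l - dualC l * log (dualC l) := by
  rw [dualK]
  ring

theorem log_dualC (hl0 : 0 < l) (hl : l < 1 / 2) :
    log (dualC l) = log l + 2 * log (1 - 2 * l) := by
  rw [dualC, log_mul hl0.ne' (by nlinarith), log_pow, Nat.cast_ofNat]

theorem dualF_monotoneOn (hl0 : 0 < l) (hl : l ≤ 1 / 6) : MonotoneOn (dualF l) (Icc 0 1) := by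
  have h₁ : MonotoneOn (dualF l) (Icc 0 l) := fun x hx y hy hxy ↦ by
    rw [dualF_of_le hx.2, dualF_of_le hy.2]
    have : (2 * x - 1) ^ 3 ≤ (2 * y - 1) ^ 3 := (Odd.pow_le_pow ⟨1, rfl⟩).2 (by linarith)
    linarith
  have h₂ : MonotoneOn (dualF l) (Icc l (1 - 2 * l)) := fun x hx y hy hxy ↦ by
    rw [dualF_of_mem_Icc hx.1 hx.2, dualF_of_mem_Icc hy.1 hy.2]
    gcongr
    · exact (dualC_pos hl0 (by linarith)).le
    · linarith [hx.1]
  have h₃ : MonotoneOn (dualF l) (Icc (1 - 2 * l) 1) := fun x hx y hy hxy ↦ by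
    rw [dualF_of_ge hl hx.1, dualF_of_ge hl hy.1]
    have hx0 : 0 ≤ x := by linarith [hx.1]
    have hy0 : 0 ≤ y := by linarith [hy.1]
    have hyx : 0 ≤ y - x := by linarith
    nlinarith [mul_nonneg (mul_nonneg hyx hx0) (sub_nonneg.2 hx.2),
      mul_nonneg (mul_nonneg hyx hy0) (sub_nonneg.2 hy.2),
      mul_nonneg (mul_nonneg hyx hx0) (sub_nonneg.2 hy.2),
      mul_nonneg (mul_nonneg hyx hy0) (sub_nonneg.2 hx.2)]
  have hlr : l ≤ 1 - 2 * l := by linarith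
  have h := (h₁.union_right h₂ (isGreatest_Icc hl0.le) (isLeast_Icc hlr)).union_right h₃
    (by rw [Icc_union_Icc_eq_Icc hl0.le hlr]; exact isGreatest_Icc (by linarith))
    (isLeast_Icc (by linarith))
  rwa [Icc_union_Icc_eq_Icc hl0.le hlr, Icc_union_Icc_eq_Icc (by linarith) (by linarith)] at h

theorem dualC_mul_taylor_two (hl : l < 1 / 2) (t : ℝ) :
    dualC l * ((t - (1 - 2 * l)) / (1 - 2 * l) - (t - (1 - 2 * l)) ^ 2 / (2 * (1 - 2 * l) ^ 2))
      = l * (1 - 2 * l) * (t - (1 - 2 * l)) - l * (t - (1 - 2 * l)) ^ 2 / 2 := by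
  have hr : 1 - 2 * l ≠ 0 := by linarith
  rw [dualC]
  generalize 1 - 2 * l = r at hr ⊢
  field_simp

theorem dualC_mul_log_le_of_le (hl0 : 0 < l) (hl : l < 1 / 2) (ht : l ≤ t)
    (htr : t ≤ 1 - 2 * l) :
    dualC l * log t ≤ dualC l * log (1 - 2 * l)
      + (l * (1 - 2 * l) * (t - (1 - 2 * l)) - l * (t - (1 - 2 * l)) ^ 2 / 2) := by
  have h := mul_le_mul_of_nonneg_left (log_le_taylor_two_of_le (hl0.trans_le ht) htr)
    (dualC_pos hl0 hl).le
  linarith [dualC_mul_taylor_two hl t]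

theorem cubic_le_taylor_two (hl : l ≤ 1 / 6) (ht : 1 - 2 * l ≤ t) :
    (1 / 4) * (t ^ 2 - (1 - 2 * l) ^ 2) - (1 / 6) * (t ^ 3 - (1 - 2 * l) ^ 3)
      ≤ l * (1 - 2 * l) * (t - (1 - 2 * l)) - l * (t - (1 - 2 * l)) ^ 2 / 2 := by
  have h : 0 ≤ (1 - 6 * l) / 4 + (t - (1 - 2 * l)) / 6 := by linarith
  nlinarith [mul_nonneg (sq_nonneg (t - (1 - 2 * l))) h]

theorem dualF_le_log (hl0 : 0 < l) (hl : l ≤ 1 / 6) (ht : l ≤ t) :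
    dualF l t ≤ dualC l * log t + dualK l := by
  rcases le_total t (1 - 2 * l) with htr | htr
  · exact (dualF_of_mem_Icc ht htr).le
  have h := mul_le_mul_of_nonneg_left (taylor_two_le_log_of_le (by linarith) htr)
    (dualC_pos hl0 (by linarith)).le
  rw [dualF_of_ge hl htr]
  linarith [cubic_le_taylor_two hl htr, dualC_mul_taylor_two (l := l) (by linarith) t]

theorem dualF_le_dualMajorant (hl0 : 0 < l) (hl : l ≤ 1 / 6) (ht : l ≤ t) :
    dualF l t ≤ dualC l * log (1 - 2 * l) + dualK l + dualMajorant l t := by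
  rw [dualMajorant]
  split_ifs with htr
  · rw [dualF_of_mem_Icc ht htr]
    linarith [dualC_mul_log_le_of_le hl0 (by linarith) ht htr]
  · rw [dualF_of_ge hl (not_le.1 htr).le]

theorem dualMajorant_sum_le_mid_mid (hl0 : 0 < l) (hl : l ≤ 1 / 6) (hx0 : 0 ≤ x) (hxl : x ≤ l)
    (hy : y ≤ 1 - 2 * l) (hz : z ≤ 1 - 2 * l) :
    dualC l + (1 / 6) * ((2 * x - 1) ^ 3 - (2 * l - 1) ^ 3) + dualMajorant l y + dualMajorant l z
      ≤ x * y * z := by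
  rw [dualMajorant, if_pos hy, dualMajorant, if_pos hz, dualC]
  obtain ⟨a, rfl⟩ : ∃ a, x = l - a := ⟨l - x, by ring⟩
  obtain ⟨b, rfl⟩ : ∃ b, y = 1 - 2 * l - b := ⟨1 - 2 * l - y, by ring⟩
  obtain ⟨d, rfl⟩ : ∃ d, z = 1 - 2 * l - d := ⟨1 - 2 * l - z, by ring⟩
  have ha : 0 ≤ a := by linarith
  have hal : a ≤ l := by linarith
  have hb : 0 ≤ b := by linarith
  have hd : 0 ≤ d := by linarith
  have hr : 0 ≤ 1 - 2 * l := by linarith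
  nlinarith [mul_nonneg (mul_nonneg (sub_nonneg.2 hal) hb) hd, mul_nonneg (mul_nonneg ha hr) hb,
    mul_nonneg (mul_nonneg ha hr) hd, mul_nonneg hr (sq_nonneg a), pow_nonneg ha 3,
    mul_nonneg hl0.le (sq_nonneg b), mul_nonneg hl0.le (sq_nonneg d)]

theorem dualMajorant_sum_le_mid_high (hl0 : 0 < l) (hl : l ≤ 1 / 6) (hxl : x ≤ l)
    (hy : y ≤ 1 - 2 * l) (hz : 1 - 2 * l < z) :
    dualC l + (1 / 6) * ((2 * x - 1) ^ 3 - (2 * l - 1) ^ 3) + dualMajorant l y + dualMajorant l z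
      ≤ x * y * z := by
  rw [dualMajorant, if_pos hy, dualMajorant, if_neg hz.not_ge, dualC]
  obtain ⟨a, rfl⟩ : ∃ a, x = l - a := ⟨l - x, by ring⟩
  obtain ⟨b, rfl⟩ : ∃ b, y = 1 - 2 * l - b := ⟨1 - 2 * l - y, by ring⟩
  obtain ⟨d, rfl⟩ : ∃ d, z = 1 - 2 * l + d := ⟨z - (1 - 2 * l), by ring⟩
  have ha : 0 ≤ a := by linarith
  have hb : 0 ≤ b := by linarith
  have hd : 0 ≤ d := by linarith
  have h6 : 0 ≤ 1 - 6 * l := by linarith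
  have hr : 0 ≤ 1 - 2 * l := by linarith
  have hcubic : 0 ≤ a * b * d + 4 / 3 * a ^ 3 + d ^ 3 / 6 := by positivity
  -- The quadratic part is `l (b - d)² / 2 + (1 - 6l) d² / 4 - r a (d - b) + 2 r a²`, which is
  -- copositive for `l ≤ 1/6`; the cubic part is `hcubic`.
  rcases le_total b d with hbd | hdb
  · nlinarith [sq_nonneg ((1 - 4 * l) * (d - b) / 2 - (1 - 2 * l) * a),
      mul_nonneg (mul_nonneg h6 hr) (sq_nonneg a),
      mul_nonneg h6 (mul_nonneg hb (add_nonneg hd (sub_nonneg.2 hbd))),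
      mul_nonneg hl0.le (sq_nonneg (b - d))]
  · nlinarith [mul_nonneg (mul_nonneg hr ha) (sub_nonneg.2 hdb), mul_nonneg h6 (sq_nonneg d),
      mul_nonneg hl0.le (sq_nonneg (b - d)), mul_nonneg hr (sq_nonneg a)]

theorem dualMajorant_sum_le_high_high (hl : l ≤ 1 / 6) (hx0 : 0 ≤ x) (hxl : x ≤ l)
    (hy : 1 - 2 * l < y) (hz : 1 - 2 * l < z) :
    dualC l + (1 / 6) * ((2 * x - 1) ^ 3 - (2 * l - 1) ^ 3) + dualMajorant l y + dualMajorant l z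
      ≤ x * y * z := by
  rw [dualMajorant, if_neg hy.not_ge, dualMajorant, if_neg hz.not_ge, dualC]
  have h1 : 0 ≤ x * (y + z - 2 + 4 * x) ^ 2 := mul_nonneg hx0 (sq_nonneg _)
  have h2 : 0 ≤ (y - 1 + 2 * x) ^ 2 * (y - (1 - 2 * l)) := mul_nonneg (sq_nonneg _) (by linarith)
  have h3 : 0 ≤ (z - 1 + 2 * x) ^ 2 * (z - (1 - 2 * l)) := mul_nonneg (sq_nonneg _) (by linarith)
  have h4 : 0 ≤ (3 / 2 - 7 * x - 2 * l) * ((y - 1 + 2 * x) ^ 2 + (z - 1 + 2 * x) ^ 2) :=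
    mul_nonneg (by linarith) (by positivity)
  linarith

theorem dualMajorant_sum_le (hl0 : 0 < l) (hl : l ≤ 1 / 6) (hx0 : 0 ≤ x) (hxl : x ≤ l) :
    dualC l + (1 / 6) * ((2 * x - 1) ^ 3 - (2 * l - 1) ^ 3) + dualMajorant l y + dualMajorant l z
      ≤ x * y * z := by
  rcases le_or_gt y (1 - 2 * l) with hy | hy <;> rcases le_or_gt z (1 - 2 * l) with hz | hz
  · exact dualMajorant_sum_le_mid_mid hl0 hl hx0 hxl hy hz
  · exact dualMajorant_sum_le_mid_high hl0 hl hxl hy hz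
  · rw [add_right_comm, mul_right_comm]
    exact dualMajorant_sum_le_mid_high hl0 hl hxl hz hy
  · exact dualMajorant_sum_le_high_high hl hx0 hxl hy hz

theorem dualF_sum_le_of_le (hl0 : 0 < l) (hl : l ≤ 1 / 6) (hx : l ≤ x) (hy : l ≤ y)
    (hz : l ≤ z) :
    dualF l x + dualF l y + dualF l z ≤ x * y * z := by
  have hx0 : 0 < x := hl0.trans_le hx
  have hy0 : 0 < y := hl0.trans_le hy
  have hz0 : 0 < z := hl0.trans_le hz
  have hlog : log (x * y * z) = log x + log y + log z := by
    rw [log_mul (by positivity) hz0.ne', log_mul hx0.ne' hy0.ne']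
  have h := mul_log_le_mul_log_add_sub (dualC_pos hl0 (by linarith)) (by positivity : 0 < x * y * z)
  rw [hlog] at h
  linarith [dualF_le_log hl0 hl hx, dualF_le_log hl0 hl hy, dualF_le_log hl0 hl hz,
    three_mul_dualK (l := l)]

theorem two_mul_dualF_add_dualF_one_nonpos (hl0 : 0 < l) (hl : l ≤ 1 / 6) :
    2 * dualF l l + dualF l 1 ≤ 0 := by
  have hr : 0 < 1 - 2 * l := by linarith
  have hc := dualC_pos hl0 (by linarith)
  have hlog : 2 * 0.6931471803 ≤ log (1 - 2 * l) - log l :=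
    calc (2 * 0.6931471803 : ℝ) ≤ 2 * log 2 := by linarith [log_two_gt_d9]
      _ = log 4 := by rw [show (4 : ℝ) = 2 ^ 2 by norm_num, log_pow, Nat.cast_ofNat]
      _ ≤ log ((1 - 2 * l) / l) := log_le_log (by norm_num) (by rw [le_div_iff₀ hl0]; linarith)
      _ = log (1 - 2 * l) - log l := log_div hr.ne' hl0.ne'
  have h := mul_le_mul_of_nonneg_left hlog hc.le
  rw [dualF_of_le le_rfl, dualF_of_ge hl (by linarith)]
  have hK := three_mul_dualK (l := l)
  rw [log_dualC hl0 (by linarith)] at hK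
  rw [dualC] at h hK ⊢
  nlinarith [mul_nonneg (sub_nonneg.2 hl) hl0.le,
    mul_nonneg (mul_nonneg hl0.le hl0.le) (sub_nonneg.2 hl)]

theorem dualF_sum_le_of_le_of_le (hl0 : 0 < l) (hl : l ≤ 1 / 6) (hx : x ∈ Icc 0 l)
    (hy : y ∈ Icc 0 l) (hz : z ∈ Icc 0 1) :
    dualF l x + dualF l y + dualF l z ≤ x * y * z := by
  have hmono := dualF_monotoneOn hl0 hl
  have hl1 : l ∈ Icc (0 : ℝ) 1 := ⟨hl0.le, by linarith⟩
  have hx' := hmono ⟨hx.1, hx.2.trans hl1.2⟩ hl1 hx.2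
  have hy' := hmono ⟨hy.1, hy.2.trans hl1.2⟩ hl1 hy.2
  have hz' := hmono hz ⟨zero_le_one, le_rfl⟩ hz.2
  have hxyz : 0 ≤ x * y * z := mul_nonneg (mul_nonneg hx.1 hy.1) hz.1
  linarith [two_mul_dualF_add_dualF_one_nonpos hl0 hl]

theorem dualF_sum_le_of_le_of_ge (hl0 : 0 < l) (hl : l ≤ 1 / 6) (hx : x ∈ Icc 0 l)
    (hy : l ≤ y) (hz : l ≤ z) :
    dualF l x + dualF l y + dualF l z ≤ x * y * z := by
  have hK := three_mul_dualK (l := l)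
  rw [log_dualC hl0 (by linarith)] at hK
  rw [dualF_of_le hx.2]
  linarith [dualF_le_dualMajorant hl0 hl hy, dualF_le_dualMajorant hl0 hl hz,
    dualMajorant_sum_le (y := y) (z := z) hl0 hl hx.1 hx.2]

theorem dualF_sum_le (hl0 : 0 < l) (hl : l ≤ 1 / 6) (hx : x ∈ Icc 0 1) (hy : y ∈ Icc 0 1)
    (hz : z ∈ Icc 0 1) : dualF l x + dualF l y + dualF l z ≤ x * y * z := by
  rcases le_total x l with hxl | hlx <;> rcases le_total y l with hyl | hly
  · exact dualF_sum_le_of_le_of_le hl0 hl ⟨hx.1, hxl⟩ ⟨hy.1, hyl⟩ hz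
  · rcases le_total z l with hzl | hlz
    · linarith [dualF_sum_le_of_le_of_le hl0 hl ⟨hx.1, hxl⟩ ⟨hz.1, hzl⟩ hy]
    · exact dualF_sum_le_of_le_of_ge hl0 hl ⟨hx.1, hxl⟩ hly hlz
  · rcases le_total z l with hzl | hlz
    · linarith [dualF_sum_le_of_le_of_le hl0 hl ⟨hy.1, hyl⟩ ⟨hz.1, hzl⟩ hx]
    · linarith [dualF_sum_le_of_le_of_ge hl0 hl ⟨hy.1, hyl⟩ hlx hlz]
  · rcases le_total z l with hzl | hlz
    · linarith [dualF_sum_le_of_le_of_ge hl0 hl ⟨hz.1, hzl⟩ hlx hly]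
    · exact dualF_sum_le_of_le hl0 hl hlx hly hlz

theorem dualF_add_two_mul_dualF_one_sub_two_mul (hl0 : 0 < l) (hl : l ≤ 1 / 6) (htl : t ≤ l) :
    dualF l t + 2 * dualF l (1 - 2 * t) = t * (1 - 2 * t) ^ 2 := by
  have hK := three_mul_dualK (l := l)
  rw [log_dualC hl0 (by linarith), dualC] at hK
  rw [dualF_of_le htl, dualF_of_ge hl (by linarith), dualC]
  linear_combination hK

theorem dualF_sum_eq_of_mul_eq (hl0 : 0 < l) (hx : l ≤ x) (hx' : x ≤ 1 - 2 * l) (hy : l ≤ y)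
    (hy' : y ≤ 1 - 2 * l) (hz : l ≤ z) (hz' : z ≤ 1 - 2 * l) (hxyz : x * y * z = dualC l) :
    dualF l x + dualF l y + dualF l z = x * y * z := by
  have hx0 : 0 < x := hl0.trans_le hx
  have hy0 : 0 < y := hl0.trans_le hy
  have hz0 : 0 < z := hl0.trans_le hz
  have hlog : log x + log y + log z = log (dualC l) := by
    rw [← hxyz, log_mul (by positivity) hz0.ne', log_mul hx0.ne' hy0.ne']
  rw [dualF_of_mem_Icc hx hx', dualF_of_mem_Icc hy hy', dualF_of_mem_Icc hz hz', hxyz]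
  linear_combination dualC l * hlog + three_mul_dualK (l := l)

end

/-- The explicit dual potential satisfies `f(x) + f(y) + f(z) ≤ xyz` on `[0,1]³`,
with equality on `M`. -/
theorem explicit_dual_xyz (l : ℝ) (hl : l ∈ Set.Ioo (0 : ℝ) (1/6)) :
    (∀ x ∈ Set.Icc (0 : ℝ) 1, ∀ y ∈ Set.Icc (0 : ℝ) 1, ∀ z ∈ Set.Icc (0 : ℝ) 1,
      dualF l x + dualF l y + dualF l z ≤ x * y * z) ∧
    (∀ p ∈ Mset l, dualF l p.1 + dualF l p.2.1 + dualF l p.2.2 = p.1 * p.2.1 * p.2.2) := by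
  obtain ⟨hl0, hl⟩ := hl
  refine ⟨fun x hx y hy z hz ↦ dualF_sum_le hl0 hl.le hx hy hz, ?_⟩
  rintro p (⟨t, -, htl, hp⟩ | ⟨hx, hx', hy, hy', hz, hz', hxyz⟩)
  · have h := dualF_add_two_mul_dualF_one_sub_two_mul hl0 hl.le htl
    rcases hp with rfl | rfl | rfl <;> dsimp only <;> linarith
  · exact dualF_sum_eq_of_mul_eq hl0 hx hx' hy hy' hz hz' hxyz
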